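/- arXiv:2210.04202 — 4 statements merged into one kernel-verified Lean document; each statement's English description precedes it below -/
import Mathlib

section
/- Let U be a set of sets containing two distinct elements A ≠ B of the same cardinality, and Set_U the full subcategory of Set spanned by U. Then the split generic object T = (U, id_U) of the family fibration Fam(Set_U) → Set is not a generic object: there exist cartesian morphisms ({A over a point}) → T lying over the two distinct functions picking A and picking B. -/
open CategoryTheory

universe w v u

set_option linter.unusedVariables false

/-- A morphism `f : X ⟶ Y` in `E` is cartesian with respect to `p : E ⥤ B`: for any
`g : H ⟶ Y` and factorization `p g = w ≫ p f` there is a unique `h : H ⟶ X` over `w`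
with `h ≫ f = g`. -/
def IsCartesianMor {E : Type*} {B : Type*} [Category E] [Category B]
    (p : E ⥤ B) {X Y : E} (f : X ⟶ Y) : Prop :=
  ∀ (H : E) (g : H ⟶ Y) (w : p.obj H ⟶ p.obj X),
    p.map g = w ≫ p.map f → ∃! h : H ⟶ X, p.map h = w ∧ h ≫ f = g

/-- `p : E ⥤ B` is a (Grothendieck) fibration: every `u : I ⟶ p Y` has a cartesian lift. -/
def IsFibration {E : Type*} {B : Type*} [Category E] [Category B] (p : E ⥤ B) : Prop :=
  ∀ (Y : E) (I : B) (u : I ⟶ p.obj Y),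
    ∃ (X : E) (f : X ⟶ Y) (e : p.obj X = I),
      IsCartesianMor p f ∧ p.map f = eqToHom e ≫ u

/-- The category `Fam C` of set-indexed families of objects of `C`: an object is a pair of an
index type `I` and a family `E : I → C`; a morphism `(J, F) ⟶ (I, E)` is a reindexing function
`u : J → I` together with morphisms `F j ⟶ E (u j)`. -/
structure Fam (C : Type u) [Category.{v} C] where
  I : Type w
  E : I → C

namespace Fam

variable {C : Type u} [Category.{v} C]

instance : Category.{max w v} (Fam.{w} C) where
  Hom X Y := Σ u : X.I → Y.I, ∀ i, X.E i ⟶ Y.E (u i)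
  id X := ⟨fun i => i, fun i => 𝟙 _⟩
  comp f g := ⟨fun i => g.1 (f.1 i), fun i => f.2 i ≫ g.2 (f.1 i)⟩
  id_comp f := Sigma.ext rfl (heq_of_eq (funext fun i => Category.id_comp _))
  comp_id f := Sigma.ext rfl (heq_of_eq (funext fun i => Category.comp_id _))
  assoc f g h := Sigma.ext rfl (heq_of_eq (funext fun i => Category.assoc _ _ _))

/-- The projection `Fam C ⥤ Set` sending an indexed family to its index set. -/
def proj (C : Type u) [Category.{v} C] : Fam.{w} C ⥤ Type w where
  obj X := X.I
  map f := TypeCat.ofHom f.1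

end Fam

/-- `T` is a generic object: for every `X` there is a unique base morphism `u : pX ⟶ pT`
over which some cartesian morphism `X ⟶ T` lies. -/
def IsGenericObj {E : Type*} {B : Type*} [Category E] [Category B]
    (p : E ⥤ B) (T : E) : Prop :=
  ∀ X : E, ∃! u : p.obj X ⟶ p.obj T,
    ∃ f : X ⟶ T, IsCartesianMor p f ∧ p.map f = u

/-- `T` is a strong generic object: every `X` admits a unique cartesian morphism `X ⟶ T`. -/
def IsStrongGenericObj {E : Type*} {B : Type*} [Category E] [Category B]
    (p : E ⥤ B) (T : E) : Prop :=
  ∀ X : E, ∃! f : X ⟶ T, IsCartesianMor p f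

/-- `T` is a split generic object for the canonical splitting of `Fam C ⥤ Set`
(which reindexes families by precomposition): for every `X` there is a unique
`u : pX → pT` with `u* T = X`. -/
def FamSplitGeneric {C : Type u} [Category.{v} C] (T : Fam.{w} C) : Prop :=
  ∀ X : Fam.{w} C, ∃! u : X.I → T.I, Fam.mk X.I (fun i => T.E (u i)) = X

/-! Cartesian morphisms of `Fam C` are those with invertible components, so a cartesian morphism
only determines its base map up to isomorphism of the fibres: the one-point family `{A}` maps
cartesianly to `(U, id)` over every `b ∈ U` with `b ≅ A`. The canonical splitting, by contrast,
reindexes by precomposition on the nose, which forces the base map to be the family itself. -/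

namespace Fam

variable {C : Type u} [Category.{v} C]

theorem isCartesianMor_proj_of_isIso {X Y : Fam.{w} C} (f : X ⟶ Y) [∀ i, IsIso (f.2 i)] :
    IsCartesianMor (proj C) f := by
  rintro ⟨J, F⟩ ⟨v, φ⟩ w hw
  -- the instance restated at `(proj C).obj X`, the type of `w j`, where search can find it
  have : ∀ i : (proj C).obj X, IsIso (f.2 i) := ‹_›
  obtain rfl : v = fun j => f.1 (w j) := funext fun j => ConcreteCategory.congr_hom hw j
  refine ⟨⟨w, fun j => φ j ≫ inv (f.2 (w j))⟩, ⟨rfl, ?_⟩, ?_⟩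
  · exact Sigma.ext rfl (heq_of_eq (funext fun j => (Category.assoc _ _ _).trans (by simp)))
  · rintro ⟨w', ψ⟩ ⟨hw', hcomp⟩
    obtain rfl : w' = w := funext fun j => ConcreteCategory.congr_hom hw' j
    refine Sigma.ext rfl (heq_of_eq (funext fun j => ?_))
    have hψ : ψ j ≫ f.2 (w j) = φ j := congrFun (eq_of_heq (Sigma.mk.inj_iff.mp hcomp).2) j
    exact (IsIso.eq_comp_inv _).mpr hψ

theorem famSplitGeneric_self (D : Type w) [Category.{v} D] :
    FamSplitGeneric (Fam.mk.{w} D (fun a => a)) :=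
  fun X => ⟨X.E, rfl, fun _ hu => eq_of_heq (Fam.mk.inj hu).2⟩

end Fam

theorem not_isGenericObj_of_isCartesianMor_of_map_ne {E B : Type*} [Category E] [Category B]
    {p : E ⥤ B} {X T : E} {f g : X ⟶ T} (hf : IsCartesianMor p f) (hg : IsCartesianMor p g)
    (hne : p.map f ≠ p.map g) : ¬ IsGenericObj p T :=
  fun hT => hne ((hT X).unique ⟨f, hf, rfl⟩ ⟨g, hg, rfl⟩)

theorem fam_splitGeneric_not_generic_general (U : Type w) (el : U → Type w)
    (A B : U) (hAB : A ≠ B)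
    (hcard : Nonempty (el A ≃ el B)) :
    FamSplitGeneric (C := InducedCategory (Type w) el)
      (Fam.mk U (fun a => a)) ∧
    ¬ IsGenericObj (Fam.proj.{w} (InducedCategory (Type w) el))
      (Fam.mk U (fun a => a)) ∧
    ∃ f g : (Fam.mk PUnit (fun _ => A) : Fam.{w} (InducedCategory (Type w) el)) ⟶
        Fam.mk U (fun a => a),
      IsCartesianMor (Fam.proj.{w} (InducedCategory (Type w) el)) f ∧
      IsCartesianMor (Fam.proj.{w} (InducedCategory (Type w) el)) g ∧
      f.1 = (fun _ => A) ∧ g.1 = (fun _ => B) := by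
  obtain ⟨e⟩ := hcard
  let f : (Fam.mk PUnit (fun _ => A) : Fam.{w} (InducedCategory (Type w) el)) ⟶
      Fam.mk U (fun a => a) := ⟨fun _ => A, fun _ => 𝟙 _⟩
  let g : (Fam.mk PUnit (fun _ => A) : Fam.{w} (InducedCategory (Type w) el)) ⟶
      Fam.mk U (fun a => a) := ⟨fun _ => B, fun _ => (InducedCategory.isoMk e.toIso).hom⟩
  have hf := Fam.isCartesianMor_proj_of_isIso f
  have hg := Fam.isCartesianMor_proj_of_isIso g
  have hne : (Fam.proj _).map f ≠ (Fam.proj _).map g :=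
    fun h => hAB (ConcreteCategory.congr_hom h PUnit.unit)
  exact ⟨Fam.famSplitGeneric_self _, not_isGenericObj_of_isCartesianMor_of_map_ne hf hg hne,
    f, g, hf, hg, rfl, rfl⟩

/-- Let `U` be a set of sets (encoded as an injection `el : U → Type`) containing two distinct
elements `A ≠ B` of the same cardinality, and `Set_U` the full subcategory of `Set` spanned by
`U` (the induced category along `el`).  Then `T = (U, id)` is a split generic object of the
family fibration `Fam Set_U ⥤ Set` but not a generic object: there are cartesian morphisms
from the family `{el A}` over a point to `T` lying over the two distinct functions picking
`A` and picking `B`. -/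
theorem fam_splitGeneric_not_generic (U : Type w) (el : U → Type w)
    (hel : Function.Injective el) (A B : U) (hAB : A ≠ B)
    (hcard : Nonempty (el A ≃ el B)) :
    FamSplitGeneric (C := InducedCategory (Type w) el)
      (Fam.mk U (fun a => a)) ∧
    ¬ IsGenericObj (Fam.proj.{w} (InducedCategory (Type w) el))
      (Fam.mk U (fun a => a)) ∧
    ∃ f g : (Fam.mk PUnit (fun _ => A) : Fam.{w} (InducedCategory (Type w) el)) ⟶
        Fam.mk U (fun a => a),
      IsCartesianMor (Fam.proj.{w} (InducedCategory (Type w) el)) f ∧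
      IsCartesianMor (Fam.proj.{w} (InducedCategory (Type w) el)) g ∧
      f.1 = (fun _ => A) ∧ g.1 = (fun _ => B) :=
  fam_splitGeneric_not_generic_general U el A B hAB hcard
end

section
/- With notation as above, if T' = (Ob(C)/≅, s) is a split generic object for the canonical splitting of Fam(C) → Set, then C is skeletal (isomorphic objects are equal). -/
open CategoryTheory

universe w v u

set_option linter.unusedVariables false

theorem FamSplitGeneric.surjective {C : Type u} [Category.{v} C] {T : Fam.{w} C}
    (hT : FamSplitGeneric T) : Function.Surjective T.E := by
  intro c
  obtain ⟨u, hu, -⟩ := hT (Fam.mk PUnit (fun _ => c))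
  exact ⟨u PUnit.unit, congrFun (eq_of_heq (Fam.mk.inj hu).2) PUnit.unit⟩

theorem fam_skeleton_splitGeneric_skeletal_general (C : Type w) [SmallCategory C]
    (s : Quotient (isIsomorphicSetoid C) → C)
    (hs : ∀ q, Quotient.mk (isIsomorphicSetoid C) (s q) = q)
    (hT : FamSplitGeneric (Fam.mk (Quotient (isIsomorphicSetoid C)) s)) :
    ∀ c d : C, (c ≅ d) → c = d := by
  have mk_injective : Function.Injective (Quotient.mk (isIsomorphicSetoid C)) :=
    (Function.LeftInverse.rightInverse_of_surjective hs hT.surjective).injective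
  exact fun c d e => mk_injective (Quotient.sound ⟨e⟩)

/-- With the setup above, if `T' = (Ob(C)/≅, s)` is a split generic object for the canonical
splitting of `Fam C ⥤ Set`, then `C` is skeletal: isomorphic objects are equal. -/
theorem fam_skeleton_splitGeneric_skeletal (C : Type w) [SmallCategory C]
    (s : Quotient (isIsomorphicSetoid C) → C)
    (hs : ∀ q, Quotient.mk (isIsomorphicSetoid C) (s q) = q)
    (φ : ∀ c : C, c ≅ s (Quotient.mk (isIsomorphicSetoid C) c))
    (hT : FamSplitGeneric (Fam.mk (Quotient (isIsomorphicSetoid C)) s)) :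
    ∀ c d : C, (c ≅ d) → c = d :=
  fam_skeleton_splitGeneric_skeletal_general C s hs hT
end

section
/- Let B be a category with finite limits, G a group object in B, and [BG] → B the externalization of the one-object internal groupoid BG (objects of [BG] are objects of B; morphisms I → J are pairs of f : I → J in B and u : I → G; all morphisms are cartesian). Fix a class M of monomorphisms in B. The skeletal generic object T = 1_B of [BG] is M-acyclic if and only if G has the right lifting property in B with respect to every member of M. -/
open CategoryTheory

universe w v u

set_option linter.unusedVariables false

/-- A generic object `T` of `p : E ⥤ B` is `M`-acyclic when for every span of cartesian maps
`X ⟵ U ⟶ T` with `p(U ⟶ X)` in `M`, there is a cartesian map `X ⟶ T` making the triangle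
commute. -/
def IsMAcyclic {E : Type*} {B : Type*} [Category E] [Category B]
    (p : E ⥤ B) (M : MorphismProperty B) (T : E) : Prop :=
  ∀ (U X : E) (i : U ⟶ X) (t : U ⟶ T),
    IsCartesianMor p i → IsCartesianMor p t → M (p.map i) →
      ∃ f : X ⟶ T, IsCartesianMor p f ∧ i ≫ f = t

/-- A group object `G` in `B`, presented via its representable presheaf of groups
(generalized elements `I ⟶ G` form a group, naturally in `I`). -/
structure RepGroupObj (B : Type u) [Category.{v} B] where
  G : B
  mul : ∀ {I : B}, (I ⟶ G) → (I ⟶ G) → (I ⟶ G)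
  one : ∀ I : B, (I ⟶ G)
  inv : ∀ {I : B}, (I ⟶ G) → (I ⟶ G)
  mul_assoc : ∀ {I : B} (a b c : I ⟶ G), mul (mul a b) c = mul a (mul b c)
  one_mul : ∀ {I : B} (a : I ⟶ G), mul (one I) a = a
  mul_one : ∀ {I : B} (a : I ⟶ G), mul a (one I) = a
  inv_mul : ∀ {I : B} (a : I ⟶ G), mul (inv a) a = one I
  mul_natural : ∀ {I J : B} (f : I ⟶ J) (a b : J ⟶ G),
    f ≫ mul a b = mul (f ≫ a) (f ≫ b)
  one_natural : ∀ {I J : B} (f : I ⟶ J), f ≫ one J = one I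

variable {B : Type u} [Category.{v} B]

/-- The externalization `[BG]` of the one-object internal groupoid `BG` determined by a
group object `G` in `B`: objects are objects of `B`, and a morphism `I ⟶ J` is a pair of
`f : I ⟶ J` in `B` and a generalized element `u : I ⟶ G`. -/
structure BGExt (𝒢 : RepGroupObj B) where
  obj : B

variable {𝒢 : RepGroupObj B}

instance : Category (BGExt 𝒢) where
  Hom I J := (I.obj ⟶ J.obj) × (I.obj ⟶ 𝒢.G)
  id I := (𝟙 I.obj, 𝒢.one I.obj)
  comp {I J K} f g := (f.1 ≫ g.1, 𝒢.mul f.2 (f.1 ≫ g.2))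
  id_comp f := by
    obtain ⟨a, b⟩ := f
    dsimp
    rw [Category.id_comp, Category.id_comp, 𝒢.one_mul]
  comp_id f := by
    obtain ⟨a, b⟩ := f
    dsimp
    rw [Category.comp_id, 𝒢.one_natural, 𝒢.mul_one]
  assoc f g h := by
    obtain ⟨a1, a2⟩ := f; obtain ⟨b1, b2⟩ := g; obtain ⟨c1, c2⟩ := h
    dsimp
    rw [𝒢.mul_natural, 𝒢.mul_assoc]
    simp

/-- The projection `[BG] ⥤ B`. -/
def BGExt.proj (𝒢 : RepGroupObj B) : BGExt 𝒢 ⥤ B where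
  obj I := I.obj
  map f := f.1

/-!
Every morphism of `[BG]` is cartesian, so acyclicity of `1` only asks for some `f : X ⟶ 1` with
`i ≫ f = t`. Such an `f` is just a generalized element `g : X ⟶ G`, and the triangle reads
`uᵢ · (i ≫ g) = uₜ`; multiplying by `uᵢ⁻¹` turns it into the extension problem
`i ≫ g = uᵢ⁻¹ · uₜ` for `G` along `i`.
-/

namespace RepGroupObj

lemma mul_inv {I : B} (a : I ⟶ 𝒢.G) : 𝒢.mul a (𝒢.inv a) = 𝒢.one I := by
  have h : 𝒢.mul (𝒢.inv a) (𝒢.mul a (𝒢.inv a)) = 𝒢.inv a := by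
    rw [← 𝒢.mul_assoc, 𝒢.inv_mul, 𝒢.one_mul]
  calc 𝒢.mul a (𝒢.inv a)
      = 𝒢.mul (𝒢.mul (𝒢.inv (𝒢.inv a)) (𝒢.inv a)) (𝒢.mul a (𝒢.inv a)) := by
        rw [𝒢.inv_mul, 𝒢.one_mul]
    _ = 𝒢.mul (𝒢.inv (𝒢.inv a)) (𝒢.mul (𝒢.inv a) (𝒢.mul a (𝒢.inv a))) := 𝒢.mul_assoc _ _ _
    _ = 𝒢.one I := by rw [h, 𝒢.inv_mul]

lemma mul_inv_cancel_left {I : B} (a b : I ⟶ 𝒢.G) : 𝒢.mul a (𝒢.mul (𝒢.inv a) b) = b := by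
  rw [← 𝒢.mul_assoc, 𝒢.mul_inv, 𝒢.one_mul]

lemma inv_mul_cancel_right {I : B} (a b : I ⟶ 𝒢.G) : 𝒢.mul (𝒢.mul a (𝒢.inv b)) b = a := by
  rw [𝒢.mul_assoc, 𝒢.inv_mul, 𝒢.mul_one]

lemma mul_inv_cancel_right {I : B} (a b : I ⟶ 𝒢.G) : 𝒢.mul (𝒢.mul a b) (𝒢.inv b) = a := by
  rw [𝒢.mul_assoc, 𝒢.mul_inv, 𝒢.mul_one]

end RepGroupObj

lemma isMAcyclic_iff_of_forall_isCartesianMor {E C : Type*} [Category E] [Category C]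
    {p : E ⥤ C} (hp : ∀ {X Y : E} (f : X ⟶ Y), IsCartesianMor p f)
    (M : MorphismProperty C) (T : E) :
    IsMAcyclic p M T ↔
      ∀ (U X : E) (i : U ⟶ X) (t : U ⟶ T), M (p.map i) → ∃ f : X ⟶ T, i ≫ f = t := by
  refine forall₄_congr fun U X i t => ?_
  simp only [hp, true_implies, true_and]

namespace BGExt

@[ext]
lemma hom_ext {X Y : BGExt 𝒢} {f g : X ⟶ Y} (h₁ : f.1 = g.1) (h₂ : f.2 = g.2) : f = g :=
  Prod.ext h₁ h₂

@[simp]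
lemma proj_map {X Y : BGExt 𝒢} (f : X ⟶ Y) : (BGExt.proj 𝒢).map f = f.1 := rfl

lemma isCartesianMor {X Y : BGExt 𝒢} (f : X ⟶ Y) : IsCartesianMor (BGExt.proj 𝒢) f := by
  intro H g w hw
  simp only [proj_map] at hw ⊢
  refine ⟨(w, 𝒢.mul g.2 (𝒢.inv (w ≫ f.2))), ⟨rfl, ?_⟩, ?_⟩
  · ext
    · exact hw.symm
    · exact 𝒢.inv_mul_cancel_right _ _
  · rintro h ⟨rfl, rfl⟩
    ext
    · rfl
    · exact (𝒢.mul_inv_cancel_right _ _).symm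

lemma exists_comp_eq_toTerminal_iff [Limits.HasTerminal B] {U X : BGExt 𝒢}
    (i : U ⟶ X) (t : U ⟶ BGExt.mk (⊤_ B)) :
    (∃ f : X ⟶ BGExt.mk (⊤_ B), i ≫ f = t) ↔
      ∃ g : X.obj ⟶ 𝒢.G, 𝒢.mul i.2 (i.1 ≫ g) = t.2 := by
  constructor
  · rintro ⟨f, rfl⟩
    exact ⟨f.2, rfl⟩
  · rintro ⟨g, hg⟩
    exact ⟨(Limits.terminal.from X.obj, g), BGExt.hom_ext (Limits.terminal.hom_ext _ _) hg⟩

end BGExt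

theorem bgExt_acyclic_iff_rlp_general [Limits.HasFiniteLimits B] (𝒢 : RepGroupObj B)
    (M : MorphismProperty B) :
    IsMAcyclic (BGExt.proj 𝒢) M (BGExt.mk (𝒢 := 𝒢) (⊤_ B)) ↔
      ∀ ⦃X Y : B⦄ (m : X ⟶ Y), M m → ∀ g : X ⟶ 𝒢.G,
        ∃ g' : Y ⟶ 𝒢.G, m ≫ g' = g := by
  rw [isMAcyclic_iff_of_forall_isCartesianMor BGExt.isCartesianMor]
  simp only [BGExt.proj_map, BGExt.exists_comp_eq_toTerminal_iff]
  constructor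
  · intro h X Y m hm g
    obtain ⟨g', hg'⟩ := h ⟨X⟩ ⟨Y⟩ (m, 𝒢.one X) (Limits.terminal.from X, g) hm
    exact ⟨g', by rwa [𝒢.one_mul] at hg'⟩
  · intro h U X i t hi
    obtain ⟨g', hg'⟩ := h i.1 hi (𝒢.mul (𝒢.inv i.2) t.2)
    exact ⟨g', by rw [hg', 𝒢.mul_inv_cancel_left]⟩

/-- Let `B` be a category with finite limits, `G` a group object in `B`, and `[BG] ⥤ B` the
externalization of the one-object internal groupoid `BG`, and let `M` be a class of
monomorphisms of `B`.  The skeletal generic object `T = 1_B` of `[BG]` is `M`-acyclic if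
and only if `G` has the right lifting property in `B` with respect to every member of `M`. -/
theorem bgExt_acyclic_iff_rlp [Limits.HasFiniteLimits B] (𝒢 : RepGroupObj B)
    (M : MorphismProperty B) (hM : ∀ ⦃X Y : B⦄ (m : X ⟶ Y), M m → Mono m) :
    IsMAcyclic (BGExt.proj 𝒢) M (BGExt.mk (𝒢 := 𝒢) (⊤_ B)) ↔
      ∀ ⦃X Y : B⦄ (m : X ⟶ Y), M m → ∀ g : X ⟶ 𝒢.G,
        ∃ g' : Y ⟶ 𝒢.G, m ≫ g' = g :=
  bgExt_acyclic_iff_rlp_general 𝒢 M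
end

section
/- In the fibered category Fam(BG) → Set for a nontrivial group G, the unique object over the singleton is a skeletal generic object (generic object) which is not gaunt (strong generic): skeletal genericity does not imply gauntness. -/
open CategoryTheory

universe w v u

set_option linter.unusedVariables false

/-!
Since `BG` is a groupoid, every morphism of `Fam BG` is cartesian over `Set`. Hence every family
maps cartesianly to the one-member family `T`, and the base map to the singleton `pT` is forced;
but the cartesian endomorphisms of `T` include one for each element of `G`, so they are not unique
once `G` is nontrivial.
-/

namespace Fam

variable {C : Type u} [Category.{v} C]

@[simp]
lemma comp_snd {X Y Z : Fam.{w} C} (f : X ⟶ Y) (g : Y ⟶ Z) (i : X.I) :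
    (f ≫ g).2 i = f.2 i ≫ g.2 (f.1 i) :=
  rfl

theorem isCartesianMor_of_isIso {X Y : Fam.{w} C} (f : X ⟶ Y) [∀ i, IsIso (f.2 i)] :
    IsCartesianMor (proj.{w} C) f := by
  rintro H ⟨g₁, g₂⟩ w hw
  obtain ⟨u, rfl⟩ : ∃ u : H.I → X.I, TypeCat.ofHom u = w := ⟨w, rfl⟩
  obtain rfl : g₁ = fun j => f.1 (u j) := funext (ConcreteCategory.congr_hom hw)
  refine ⟨⟨u, fun j => g₂ j ≫ inv (f.2 (u j))⟩, ⟨rfl, ?_⟩, ?_⟩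
  · exact Sigma.ext rfl (heq_of_eq (funext fun j => by simp))
  · rintro ⟨h₁, h₂⟩ ⟨hh, hcomp⟩
    obtain rfl : u = h₁ := funext fun j => (ConcreteCategory.congr_hom hh j).symm
    have hcomp_snd : (fun j => h₂ j ≫ f.2 (u j)) = g₂ := eq_of_heq (Sigma.mk.inj hcomp).2
    exact Sigma.ext rfl (heq_of_eq (funext fun j => by simp [← hcomp_snd]))

abbrev single (c : C) : Fam.{w} C :=
  ⟨PUnit, fun _ => c⟩

end Fam

theorem isGenericObj_of_subsingleton {E : Type*} {B : Type*} [Category E] [Category B]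
    {p : E ⥤ B} {T : E} (hsub : ∀ X, Subsingleton (p.obj X ⟶ p.obj T))
    (hcart : ∀ X, ∃ f : X ⟶ T, IsCartesianMor p f) : IsGenericObj p T := fun X =>
  have ⟨f, hf⟩ := hcart X
  ⟨p.map f, ⟨f, hf, rfl⟩, fun _ _ => Subsingleton.elim _ _⟩

theorem not_isStrongGenericObj_of_ne {E : Type*} {B : Type*} [Category E] [Category B]
    {p : E ⥤ B} {T : E} {f g : T ⟶ T} (hf : IsCartesianMor p f) (hg : IsCartesianMor p g)
    (hne : f ≠ g) : ¬ IsStrongGenericObj p T := fun h =>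
  hne ((h T).unique hf hg)

namespace Fam

variable {C : Type u} [Groupoid.{v} C]

theorem isCartesianMor_of_groupoid {X Y : Fam.{w} C} (f : X ⟶ Y) :
    IsCartesianMor (proj.{w} C) f :=
  isCartesianMor_of_isIso f

theorem isGenericObj_single {c : C} (hc : ∀ d : C, Nonempty (d ⟶ c)) :
    IsGenericObj (proj.{w} C) (single c) :=
  isGenericObj_of_subsingleton (fun _ => ⟨fun _ _ => ConcreteCategory.hom_ext _ _ fun _ => rfl⟩)
    fun X => ⟨⟨fun _ => PUnit.unit, fun i => (hc (X.E i)).some⟩, isCartesianMor_of_groupoid _⟩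

theorem not_isStrongGenericObj_single {c : C} {φ ψ : c ⟶ c} (hne : φ ≠ ψ) :
    ¬ IsStrongGenericObj (proj.{w} C) (single c) := by
  let lift (χ : c ⟶ c) : single.{w} c ⟶ single c := ⟨id, fun _ => χ⟩
  have lift_injective : Function.Injective lift := fun _ _ h =>
    congrFun (eq_of_heq (Sigma.mk.inj h).2) PUnit.unit
  exact not_isStrongGenericObj_of_ne (isCartesianMor_of_groupoid (lift φ))
    (isCartesianMor_of_groupoid (lift ψ)) (lift_injective.ne hne)

end Fam

/-- In the family fibration `Fam BG ⥤ Set` for a nontrivial group `G`, the object over the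
singleton set is a skeletal generic object (the base map over which a cartesian lift exists
is always unique) but not a gaunt (strong) generic object (cartesian endomorphisms of `T`
correspond to elements of `G`): skeletal genericity does not imply gauntness. -/
theorem fam_singleObj_skeletal_not_gaunt (G : Type w) [Group G] [Nontrivial G] :
    IsGenericObj (Fam.proj.{w} (SingleObj G))
      (Fam.mk PUnit (fun _ => SingleObj.star G)) ∧
    ¬ IsStrongGenericObj (Fam.proj.{w} (SingleObj G))
      (Fam.mk PUnit (fun _ => SingleObj.star G)) := by
  obtain ⟨a, b, hab⟩ := exists_pair_ne G
  exact ⟨Fam.isGenericObj_single fun _ => ⟨(1 : G)⟩,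
    Fam.not_isStrongGenericObj_single (φ := (a : SingleObj.star G ⟶ SingleObj.star G)) hab⟩
end
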